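/- arXiv:1501.06965 — 5 statements merged into one kernel-verified Lean document; each statement's English description precedes it below -/
import Mathlib

section
/- Suppose h : X_A → X_B is a homeomorphism and k₁, l₁ : X_A → ℤ≥0 are continuous functions satisfying σ_B^{k₁(x)}(h(σ_A(x))) = σ_B^{l₁(x)}(h(x)) for all x ∈ X_A. Define Ψ_h(f)(x) = Σ_{i=0}^{l₁(x)−1} f(σ_B^i(h(x))) − Σ_{j=0}^{k₁(x)−1} f(σ_B^j(h(σ_A(x)))) for f ∈ C(X_B, ℤ). Then Ψ_h(f) is a continuous ℤ-valued function on X_A, and Ψ_h : C(X_B, ℤ) → C(X_A, ℤ) is a homomorphism of abelian groups. -/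
def ShiftSpace (N : ℕ) (A : ℕ → ℕ → ℕ) : Set (ℕ → ℕ) :=
  {x | (∀ n, 1 ≤ x n ∧ x n ≤ N) ∧ ∀ n, A (x n) (x (n + 1)) = 1}

def shiftMap (N : ℕ) (A : ℕ → ℕ → ℕ) (x : ShiftSpace N A) : ShiftSpace N A :=
  ⟨fun n => (x : ℕ → ℕ) (n + 1), fun n => x.2.1 (n + 1), fun n => x.2.2 (n + 1)⟩

/-- The map `Ψ_h` of Matsumoto–Matui, defined from the data of a continuous
orbit equivalence: `Ψ_h(f)(x) = Σ_{i<l₁(x)} f(σ_B^i(h x)) − Σ_{j<k₁(x)} f(σ_B^j(h(σ_A x)))`. -/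
def PsiMap {X Y : Type*} (σA : X → X) (σB : Y → Y) (h : X → Y)
    (k₁ l₁ : X → ℕ) (f : Y → ℤ) (x : X) : ℤ :=
  (∑ i ∈ Finset.range (l₁ x), f (σB^[i] (h x))) -
    ∑ j ∈ Finset.range (k₁ x), f (σB^[j] (h (σA x)))


lemma shiftMap_continuous (N : ℕ) (A : ℕ → ℕ → ℕ) : Continuous (shiftMap N A) := by
  apply Continuous.subtype_mk
  exact continuous_pi fun n => (continuous_apply (n + 1)).comp continuous_subtype_val

lemma cont_of_discrete {X : Type*} [TopologicalSpace X] {g : X → ℕ} (hg : Continuous g)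
    {F : ℕ → X → ℤ} (hF : ∀ n, Continuous (F n)) : Continuous fun x => F (g x) x := by
  rw [continuous_iff_continuousAt]
  intro x₀
  have hev : ∀ᶠ x in nhds x₀, g x = g x₀ :=
    hg.continuousAt (IsOpen.mem_nhds (isOpen_discrete {g x₀}) rfl)
  exact ((hF (g x₀)).continuousAt).congr (hev.mono fun x hx => by simp [hx])

/-- `Ψ_h(f)` is a continuous `ℤ`-valued function on `X_A` and
`Ψ_h : C(X_B, ℤ) → C(X_A, ℤ)` is a homomorphism of abelian groups. -/
theorem PsiMap_continuous_and_additive (N M : ℕ) (A B : ℕ → ℕ → ℕ)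
    (h : ShiftSpace N A ≃ₜ ShiftSpace M B)
    (k₁ l₁ : ShiftSpace N A → ℕ) (hk₁ : Continuous k₁) (hl₁ : Continuous l₁)
    (horb : ∀ x, (shiftMap M B)^[k₁ x] (h (shiftMap N A x)) =
      (shiftMap M B)^[l₁ x] (h x)) :
    (∀ f : ShiftSpace M B → ℤ, Continuous f →
      Continuous (PsiMap (shiftMap N A) (shiftMap M B) h k₁ l₁ f)) ∧
    (∀ (f g : ShiftSpace M B → ℤ) (x : ShiftSpace N A),
      PsiMap (shiftMap N A) (shiftMap M B) h k₁ l₁ (f + g) x =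
        PsiMap (shiftMap N A) (shiftMap M B) h k₁ l₁ f x +
          PsiMap (shiftMap N A) (shiftMap M B) h k₁ l₁ g x) := by
  constructor
  · intro f hf
    have hB := shiftMap_continuous M B
    have hcomp : ∀ (φ : ShiftSpace N A → ShiftSpace M B), Continuous φ →
        ∀ n : ℕ, Continuous fun x => ∑ i ∈ Finset.range n, f ((shiftMap M B)^[i] (φ x)) := by
      intro φ hφ n
      exact continuous_finset_sum _ fun i _ => hf.comp ((hB.iterate i).comp hφ)
    have h1 : Continuous fun x => ∑ i ∈ Finset.range (l₁ x), f ((shiftMap M B)^[i] (h x)) :=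
      cont_of_discrete hl₁ (hcomp _ h.continuous)
    have h2 : Continuous fun x =>
        ∑ j ∈ Finset.range (k₁ x), f ((shiftMap M B)^[j] (h (shiftMap N A x))) :=
      cont_of_discrete hk₁ (hcomp _ (h.continuous.comp (shiftMap_continuous N A)))
    exact h1.sub h2
  · intro f g x
    simp only [PsiMap, Pi.add_apply, Finset.sum_add_distrib]
    ring
end

section
/- With h, k₁, l₁, Ψ_h as above, the identity Ψ_h(f − f∘σ_B) = f∘h − f∘h∘σ_A holds for every f ∈ C(X_B, ℤ). Consequently Ψ_h maps the coboundary subgroup {g − g∘σ_B} of C(X_B, ℤ) into the coboundary subgroup {ξ − ξ∘σ_A} of C(X_A, ℤ), and induces a group homomorphism from H^B = C(X_B,ℤ)/{g−g∘σ_B} to H^A = C(X_A,ℤ)/{ξ−ξ∘σ_A}. -/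
/-- `Ψ_h(f − f∘σ_B) = f∘h − f∘h∘σ_A`; consequently `Ψ_h` maps
coboundaries to coboundaries and induces a group homomorphism `H^B → H^A`. -/
theorem PsiMap_coboundary (N M : ℕ) (A B : ℕ → ℕ → ℕ)
    (h : ShiftSpace N A ≃ₜ ShiftSpace M B)
    (k₁ l₁ : ShiftSpace N A → ℕ) (hk₁ : Continuous k₁) (hl₁ : Continuous l₁)
    (horb : ∀ x, (shiftMap M B)^[k₁ x] (h (shiftMap N A x)) =
      (shiftMap M B)^[l₁ x] (h x)) :
    (∀ f : ShiftSpace M B → ℤ, Continuous f → ∀ x,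
      PsiMap (shiftMap N A) (shiftMap M B) h k₁ l₁
          (fun y => f y - f (shiftMap M B y)) x =
        f (h x) - f (h (shiftMap N A x))) ∧
    (∀ g : ShiftSpace M B → ℤ, Continuous g →
      ∃ ξ : ShiftSpace N A → ℤ, Continuous ξ ∧ ∀ x,
        PsiMap (shiftMap N A) (shiftMap M B) h k₁ l₁
            (fun y => g y - g (shiftMap M B y)) x =
          ξ x - ξ (shiftMap N A x)) := by
  have key : ∀ f : ShiftSpace M B → ℤ, ∀ x,
      PsiMap (shiftMap N A) (shiftMap M B) h k₁ l₁
          (fun y => f y - f (shiftMap M B y)) x =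
        f (h x) - f (h (shiftMap N A x)) := by
    intro f x
    have tel : ∀ (y : ShiftSpace M B) (n : ℕ),
        ∑ i ∈ Finset.range n,
          (fun z => f z - f (shiftMap M B z)) ((shiftMap M B)^[i] y)
          = f y - f ((shiftMap M B)^[n] y) := by
      intro y n
      have := Finset.sum_range_sub' (fun i => f ((shiftMap M B)^[i] y)) n
      simpa [Function.iterate_succ_apply'] using this
    unfold PsiMap
    rw [tel, tel, horb x]
    ring
  refine ⟨fun f _ x => key f x, fun g hg => ⟨fun x => g (h x),
    hg.comp h.continuous, fun x => key g x⟩⟩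
end

section
/- Define ξ : X_A → X_{Ã} by replacing every occurrence of the symbol 1 in a sequence by the word (1,0). Then ξ is well-defined (its image lies in X_{Ã}), continuous, injective, and satisfies σ_{Ã}^{k₁(x)}(ξ(σ_A(x))) = σ_{Ã}^{l₁(x)}(ξ(x)) for all x ∈ X_A, where k₁(x) = 0 and l₁(x) = 2 if x₁ = 1, l₁(x) = 1 otherwise. -/
/-- One-sided shift space over symbols `{0, 1, …, N}`. -/
def ShiftSpace0 (N : ℕ) (A : ℕ → ℕ → ℕ) : Set (ℕ → ℕ) :=
  {x | (∀ n, x n ≤ N) ∧ ∀ n, A (x n) (x (n + 1)) = 1}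

/-- The shift on raw sequences. -/
def rawShift (x : ℕ → ℕ) : ℕ → ℕ := fun n => x (n + 1)

/-- The expansion `Ã` of the matrix `A` at the vertex `1`, over the symbol set
`{0, 1, …, N}`: `Ã(1,0) = 1`, `Ã(1,j) = 0` for `j ≥ 1`; `Ã(0,0) = 0`,
`Ã(0,j) = A(1,j)` for `j ≥ 1`; `Ã(i,0) = 0`, `Ã(i,j) = A(i,j)` for `i ≥ 2`. -/
def expandAt1 (A : ℕ → ℕ → ℕ) : ℕ → ℕ → ℕ := fun i j =>
  if i = 1 then (if j = 0 then 1 else 0)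
  else if i = 0 then (if j = 0 then 0 else A 1 j)
  else if j = 0 then 0 else A i j

/-- The position in `ξ(x)` of the `n`-th letter of `x`, where `ξ` replaces
every symbol `1` by the word `(1,0)`. -/
def posf (x : ℕ → ℕ) : ℕ → ℕ
  | 0 => 0
  | n + 1 => posf x n + (if x n = 1 then 2 else 1)

/-- The map `ξ : X_A → X_Ã` replacing every occurrence of the symbol `1`
by the word `(1,0)`. -/
noncomputable def xiMap (x : ℕ → ℕ) : ℕ → ℕ := fun m =>
  letI := Classical.dec (∃ n, posf x n = m)
  if h : ∃ n, posf x n = m then x h.choose else 0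

/-- The map `η : X_Ã → X_A` deleting every occurrence of the symbol `0`. -/
noncomputable def etaMap (x : ℕ → ℕ) : ℕ → ℕ := fun m =>
  x (Nat.nth (fun i => x i ≠ 0) m)

lemma posf_strictMono (x : ℕ → ℕ) : StrictMono (posf x) :=
  strictMono_nat_of_lt_succ fun n => by
    simp only [posf]; split <;> omega

lemma le_posf (x : ℕ → ℕ) (n : ℕ) : n ≤ posf x n := by
  induction n with
  | zero => simp [posf]
  | succ n ih => simp only [posf]; split <;> omega

lemma xiMap_posf (x : ℕ → ℕ) (n : ℕ) : xiMap x (posf x n) = x n := by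
  have h : ∃ k, posf x k = posf x n := ⟨n, rfl⟩
  simp only [xiMap, dif_pos h]
  congr 1
  exact (posf_strictMono x).injective h.choose_spec

lemma xiMap_gap (x : ℕ → ℕ) {n : ℕ} (h1 : x n = 1) :
    xiMap x (posf x n + 1) = 0 := by
  have h : ¬ ∃ k, posf x k = posf x n + 1 := by
    rintro ⟨k, hk⟩
    have hnk : n < k := (posf_strictMono x).lt_iff_lt.mp (by omega)
    have h2 : posf x (n + 1) ≤ posf x k := (posf_strictMono x).monotone hnk
    simp only [posf, h1, if_pos] at h2
    omega
  simp only [xiMap, dif_neg h]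

lemma posf_cover (x : ℕ → ℕ) (m : ℕ) :
    (∃ n, posf x n = m) ∨ (∃ n, x n = 1 ∧ posf x n + 1 = m) := by
  induction m with
  | zero => exact Or.inl ⟨0, rfl⟩
  | succ m ih =>
    rcases ih with ⟨n, hn⟩ | ⟨n, h1, hn⟩
    · by_cases h1 : x n = 1
      · exact Or.inr ⟨n, h1, by omega⟩
      · exact Or.inl ⟨n + 1, by simp only [posf, if_neg h1]; omega⟩
    · exact Or.inl ⟨n + 1, by simp only [posf, if_pos h1]; omega⟩

lemma posf_congr {x y : ℕ → ℕ} {n : ℕ} (h : ∀ k < n, x k = y k) :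
    posf x n = posf y n := by
  induction n with
  | zero => rfl
  | succ n ih =>
    simp only [posf, ih (fun k hk => h k (by omega)), h n (by omega)]

lemma xiMap_congr {x y : ℕ → ℕ} {m : ℕ} (h : ∀ k ≤ m, x k = y k) :
    xiMap x m = xiMap y m := by
  by_cases hx : ∃ n, posf x n = m
  · obtain ⟨n, hn⟩ := hx
    have hnm : n ≤ m := (le_posf x n).trans hn.le
    have hy : posf y n = m := by
      rw [← posf_congr (fun k hk => h k (by omega))]; exact hn
    have e1 : xiMap x m = x n := by rw [← hn]; exact xiMap_posf x n
    have e2 : xiMap y m = y n := by rw [← hy]; exact xiMap_posf y n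
    rw [e1, e2, h n hnm]
  · have hy : ¬ ∃ n, posf y n = m := by
      rintro ⟨n, hn⟩
      have hnm : n ≤ m := (le_posf y n).trans hn.le
      exact hx ⟨n, by rw [posf_congr (fun k hk => h k (by omega))]; exact hn⟩
    simp only [xiMap, dif_neg hx, dif_neg hy]

lemma rawShift_iterate (y : ℕ → ℕ) (l m : ℕ) : rawShift^[l] y m = y (m + l) := by
  induction l generalizing y with
  | zero => rfl
  | succ l ih =>
    rw [Function.iterate_succ_apply, ih]
    rfl

lemma posf_one (x : ℕ → ℕ) : posf x 1 = if x 0 = 1 then 2 else 1 := by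
  show posf x 0 + _ = _
  simp [posf]

lemma posf_shift (x : ℕ → ℕ) (n : ℕ) :
    posf x (n + 1) = posf x 1 + posf (rawShift x) n := by
  induction n with
  | zero => rfl
  | succ n ih =>
    show posf x (n + 1) + (if x (n + 1) = 1 then 2 else 1)
        = posf x 1 + (posf (rawShift x) n + (if rawShift x n = 1 then 2 else 1))
    have hr : rawShift x n = x (n + 1) := rfl
    rw [hr, ih]
    split <;> omega

lemma xiMap_rawShift (x : ℕ → ℕ) (m : ℕ) :
    xiMap (rawShift x) m = xiMap x (m + posf x 1) := by
  by_cases h : ∃ n, posf (rawShift x) n = m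
  · obtain ⟨n, hn⟩ := h
    have h2 : posf x (n + 1) = m + posf x 1 := by rw [posf_shift]; omega
    have e1 : xiMap (rawShift x) m = rawShift x n := by
      rw [← hn]; exact xiMap_posf _ n
    have e2 : xiMap x (m + posf x 1) = x (n + 1) := by
      rw [← h2]; exact xiMap_posf _ _
    rw [e1, e2]; rfl
  · have h2 : ¬ ∃ n, posf x n = m + posf x 1 := by
      rintro ⟨n, hn⟩
      have h1 : 1 ≤ posf x 1 := le_posf x 1
      match n with
      | 0 => have h0 : posf x 0 = 0 := rfl; omega
      | k + 1 =>
        rw [posf_shift] at hn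
        exact h ⟨k, by omega⟩
    simp only [xiMap, dif_neg h, dif_neg h2]

lemma xiMap_injective : Function.Injective xiMap := by
  intro x y hxy
  have key : ∀ n, x n = y n ∧ posf x n = posf y n := by
    intro n
    induction n with
    | zero =>
      have hx : xiMap x 0 = x 0 := xiMap_posf x 0
      have hy : xiMap y 0 = y 0 := xiMap_posf y 0
      exact ⟨by rw [← hx, ← hy, hxy], rfl⟩
    | succ n ih =>
      have hp : posf x (n + 1) = posf y (n + 1) := by
        simp only [posf, ih.1, ih.2]
      refine ⟨?_, hp⟩
      have hx := xiMap_posf x (n + 1)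
      have hy := xiMap_posf y (n + 1)
      rw [← hx, ← hy, hp, hxy]
  funext n
  exact (key n).1

lemma xiMap_mem {N : ℕ} {A : ℕ → ℕ → ℕ} {x : ℕ → ℕ} (hx : x ∈ ShiftSpace N A) :
    xiMap x ∈ ShiftSpace0 N (expandAt1 A) := by
  obtain ⟨hb, ha⟩ := hx
  constructor
  · intro m
    rcases posf_cover x m with ⟨n, hn⟩ | ⟨n, h1, hn⟩
    · rw [← hn, xiMap_posf]; exact (hb n).2
    · rw [← hn, xiMap_gap x h1]; exact Nat.zero_le N
  · intro m
    rcases posf_cover x m with ⟨n, hn⟩ | ⟨n, h1, hn⟩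
    · by_cases h1 : x n = 1
      · rw [← hn, xiMap_posf, xiMap_gap x h1, h1]
        simp [expandAt1]
      · have hsucc : posf x (n + 1) = posf x n + 1 := by
          simp only [posf, if_neg h1]
        rw [← hn, xiMap_posf, ← hsucc, xiMap_posf]
        have hx0 : x n ≠ 0 := by have := (hb n).1; omega
        have hx1 : x (n + 1) ≠ 0 := by have := (hb (n + 1)).1; omega
        simp [expandAt1, h1, hx0, hx1, ha n]
    · have hsucc : posf x (n + 1) = posf x n + 1 + 1 := by
        simp only [posf, if_pos h1]
      rw [← hn, xiMap_gap x h1, ← hsucc, xiMap_posf]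
      have hx1 : x (n + 1) ≠ 0 := by have := (hb (n + 1)).1; omega
      have e : expandAt1 A 0 (x (n + 1)) = A 1 (x (n + 1)) := by
        simp [expandAt1, hx1]
      rw [e]
      have h := ha n
      rwa [h1] at h

lemma xiMap_continuous : Continuous xiMap := by
  apply continuous_pi
  intro m
  have key : (fun x => xiMap x m) =
      (fun v : Fin (m + 1) → ℕ =>
        xiMap (fun k => if h : k < m + 1 then v ⟨k, h⟩ else 0) m) ∘
      (fun x (k : Fin (m + 1)) => x k.val) := by
    funext x
    exact xiMap_congr (fun k hk => by rw [dif_pos (Nat.lt_succ_of_le hk)])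
  rw [key]
  exact (continuous_of_discreteTopology).comp
    (continuous_pi fun k => continuous_apply k.val)

/-- `ξ` maps `X_A` into `X_Ã`, is continuous and injective on
`X_A`, and satisfies `σ_Ã^{k₁(x)}(ξ(σ_A(x))) = σ_Ã^{l₁(x)}(ξ(x))` with
`k₁ = 0` and `l₁(x) = 2` if `x₁ = 1`, `l₁(x) = 1` otherwise. -/
theorem xiMap_properties (N : ℕ) (A : ℕ → ℕ → ℕ) :
    (∀ x ∈ ShiftSpace N A, xiMap x ∈ ShiftSpace0 N (expandAt1 A)) ∧
    ContinuousOn xiMap (ShiftSpace N A) ∧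
    Set.InjOn xiMap (ShiftSpace N A) ∧
    (∀ x ∈ ShiftSpace N A,
      xiMap (rawShift x) = rawShift^[if x 0 = 1 then 2 else 1] (xiMap x)) := by
  refine ⟨fun x hx => xiMap_mem hx, xiMap_continuous.continuousOn,
    xiMap_injective.injOn, fun x _ => ?_⟩
  funext m
  rw [rawShift_iterate, xiMap_rawShift, posf_one]
end

section
/- With ξ : X_A → X_{Ã} and η : X_{Ã} → X_A as above, η ∘ ξ = id on X_A, and (ξ ∘ η)(x̃) = σ_{Ã}(x̃) if x̃₁ = 0 and (ξ ∘ η)(x̃) = x̃ otherwise. -/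
/-- `Nat.nth` of the range of a strictly monotone function. -/
lemma nth_range (f : ℕ → ℕ) (hf : StrictMono f) (n : ℕ) :
    Nat.nth (fun i => ∃ m, f m = i) n = f n := by
  classical
  have hp : (fun i => ∃ m, f m = i) (f n) := ⟨n, rfl⟩
  have hc : Nat.count (fun i => ∃ m, f m = i) (f n) = n := by
    rw [Nat.count_eq_card_filter_range]
    have h : (Finset.range (f n)).filter (fun i => ∃ m, f m = i)
        = (Finset.range n).image f := by
      ext i
      simp only [Finset.mem_filter, Finset.mem_range, Finset.mem_image]
      constructor
      · rintro ⟨hi, m, rfl⟩; exact ⟨m, hf.lt_iff_lt.mp hi, rfl⟩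
      · rintro ⟨m, hm, rfl⟩; exact ⟨hf hm, m, rfl⟩
    rw [h, Finset.card_image_of_injective _ hf.injective, Finset.card_range]
  conv_lhs => rw [← hc]
  exact Nat.nth_count hp

/-- The enumeration of the nonzero positions of `x`, for `x` in the expanded
shift space. -/
def tfun (x : ℕ → ℕ) : ℕ → ℕ
  | 0 => if x 0 = 0 then 1 else 0
  | m + 1 => tfun x m + (if x (tfun x m) = 1 then 2 else 1)

lemma tfun_strictMono (x : ℕ → ℕ) : StrictMono (tfun x) := by
  apply strictMono_nat_of_lt_succ
  intro n
  show tfun x n < tfun x n + _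
  split <;> omega

/-- `η ∘ ξ = id` on `X_A`, and `ξ ∘ η` is `σ_Ã` on points of
`X_Ã` starting with the symbol `0` and the identity on all other points. -/
theorem etaMap_xiMap_inverses (N : ℕ) (A : ℕ → ℕ → ℕ) :
    (∀ x ∈ ShiftSpace N A, etaMap (xiMap x) = x) ∧
    (∀ x ∈ ShiftSpace0 N (expandAt1 A),
      xiMap (etaMap x) = if x 0 = 0 then rawShift x else x) := by
  classical
  constructor
  · -- Part 1 : η ∘ ξ = id on X_A
    rintro x ⟨hx1, -⟩
    funext m
    have hpred : (fun i => xiMap x i ≠ 0) = (fun i => ∃ n, posf x n = i) := by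
      funext i
      apply propext
      constructor
      · intro hne
        by_contra h
        apply hne
        unfold xiMap
        rw [dif_neg h]
      · rintro ⟨n, rfl⟩
        rw [xiMap_posf]
        have := (hx1 n).1
        omega
    show xiMap x (Nat.nth (fun i => xiMap x i ≠ 0) m) = x m
    rw [hpred, nth_range _ (posf_strictMono x), xiMap_posf]
  · -- Part 2 : ξ ∘ η
    rintro x ⟨-, hxA⟩
    -- structure of admissible sequences for the expanded matrix
    have h1 : ∀ n, x n = 1 → x (n + 1) = 0 := by
      intro n hn
      by_contra hc
      have h := hxA n
      rw [hn] at h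
      unfold expandAt1 at h
      rw [if_pos rfl, if_neg hc] at h
      exact one_ne_zero h.symm
    have h2 : ∀ n, x n ≠ 1 → x (n + 1) ≠ 0 := by
      intro n hn hc
      have h := hxA n
      rw [hc] at h
      unfold expandAt1 at h
      rw [if_neg hn] at h
      by_cases h0 : x n = 0
      · rw [if_pos h0, if_pos rfl] at h; exact one_ne_zero h.symm
      · rw [if_neg h0, if_pos rfl] at h; exact one_ne_zero h.symm
    have hs : ∀ m, tfun x m < tfun x (m + 1) :=
      fun m => tfun_strictMono x (Nat.lt_succ_self m)
    have ht0 : tfun x 0 = if x 0 = 0 then 1 else 0 := rfl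
    have hstep : ∀ m, tfun x (m + 1) = tfun x m + (if x (tfun x m) = 1 then 2 else 1) :=
      fun m => rfl
    -- x (tfun x m) ≠ 0
    have htne : ∀ m, x (tfun x m) ≠ 0 := by
      intro m
      induction m with
      | zero =>
        rw [ht0]
        by_cases h0 : x 0 = 0
        · rw [if_pos h0]
          exact h2 0 (by rw [h0]; omega)
        · rw [if_neg h0]; exact h0
      | succ m ih =>
        rw [hstep m]
        by_cases hone : x (tfun x m) = 1
        · rw [if_pos hone]
          have hz : x (tfun x m + 1) = 0 := h1 _ hone
          have he : tfun x m + 2 = (tfun x m + 1) + 1 := by omega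
          rw [he]
          exact h2 _ (by rw [hz]; omega)
        · rw [if_neg hone]
          exact h2 _ hone
    -- every index is below tfun x 0 or in some interval [tfun x m, tfun x (m+1))
    have hcover : ∀ i, i < tfun x 0 ∨ ∃ m, tfun x m ≤ i ∧ i < tfun x (m + 1) := by
      intro i
      induction i with
      | zero =>
        by_cases h0 : tfun x 0 = 0
        · right; refine ⟨0, by omega, ?_⟩; have := hs 0; omega
        · left; omega
      | succ i ih =>
        rcases ih with hlt | ⟨m, hm1, hm2⟩
        · by_cases h0 : i + 1 < tfun x 0
          · left; exact h0
          · right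
            refine ⟨0, by omega, ?_⟩
            have := hs 0
            omega
        · by_cases h0 : i + 1 < tfun x (m + 1)
          · right; exact ⟨m, by omega, h0⟩
          · right
            refine ⟨m + 1, by omega, ?_⟩
            have := hs (m + 1)
            omega
    -- range characterization
    have hrange : ∀ i, x i ≠ 0 ↔ ∃ m, tfun x m = i := by
      intro i
      constructor
      · intro hne
        rcases hcover i with hlt | ⟨m, hm1, hm2⟩
        · exfalso
          by_cases h0 : x 0 = 0
          · rw [ht0, if_pos h0] at hlt
            have : i = 0 := by omega
            exact hne (this ▸ h0)
          · rw [ht0, if_neg h0] at hlt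
            omega
        · have hst := hstep m
          by_cases hone : x (tfun x m) = 1
          · rw [if_pos hone] at hst
            rcases (by omega : i = tfun x m ∨ i = tfun x m + 1) with rfl | rfl
            · exact ⟨m, rfl⟩
            · exact absurd (h1 _ hone) hne
          · rw [if_neg hone] at hst
            exact ⟨m, by omega⟩
      · rintro ⟨m, rfl⟩; exact htne m
    -- etaMap x m = x (tfun x m)
    have hy : ∀ m, etaMap x m = x (tfun x m) := by
      intro m
      show x (Nat.nth (fun i => x i ≠ 0) m) = x (tfun x m)
      have hp : (fun i => x i ≠ 0) = (fun i => ∃ n, tfun x n = i) := by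
        funext i; exact propext (hrange i)
      rw [hp, nth_range _ (tfun_strictMono x)]
    -- posf of etaMap x
    have hposf : ∀ m, posf (etaMap x) m + tfun x 0 = tfun x m := by
      intro m
      induction m with
      | zero => simp [posf]
      | succ m ih =>
        show posf (etaMap x) m + (if etaMap x m = 1 then 2 else 1) + tfun x 0
            = tfun x (m + 1)
        rw [hy m, hstep m]
        omega
    -- the common value
    have hmain : ∀ p, xiMap (etaMap x) p = x (p + tfun x 0) := by
      intro p
      unfold xiMap
      by_cases h : ∃ n, posf (etaMap x) n = p
      · rw [dif_pos h]
        rw [hy h.choose, ← hposf h.choose, h.choose_spec]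
      · rw [dif_neg h]
        by_contra hne
        have hne' : x (p + tfun x 0) ≠ 0 := fun hc => hne hc.symm
        obtain ⟨m, hm⟩ := (hrange _).mp hne'
        have hle : tfun x 0 ≤ tfun x m := (tfun_strictMono x).monotone (Nat.zero_le m)
        exact h ⟨m, by have := hposf m; omega⟩
    funext p
    by_cases h0 : x 0 = 0
    · rw [if_pos h0]
      show xiMap (etaMap x) p = x (p + 1)
      rw [hmain p, ht0, if_pos h0]
    · rw [if_neg h0, hmain p, ht0, if_neg h0, Nat.add_zero]
end

section
/- Define Ψ_ξ : C(X_{Ã}, ℤ) → C(X_A, ℤ) by Ψ_ξ(𝔣)(x) = 𝔣(ξ(x)) + 𝔣(σ_{Ã}(ξ(x))) if x₁ = 1 and Ψ_ξ(𝔣)(x) = 𝔣(ξ(x)) otherwise, and Ψ_η : C(X_A, ℤ) → C(X_{Ã}, ℤ) by Ψ_η(f)(x̃) = 0 if x̃₁ = 0 and Ψ_η(f)(x̃) = f(η(x̃)) otherwise. Then (Ψ_ξ ∘ Ψ_η)(f) = f for all f ∈ C(X_A, ℤ). -/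
/-- The map `Ψ_ξ : C(X_Ã, ℤ) → C(X_A, ℤ)`. -/
noncomputable def PsiXi (f : (ℕ → ℕ) → ℤ) : (ℕ → ℕ) → ℤ := fun x =>
  if x 0 = 1 then f (xiMap x) + f (rawShift (xiMap x)) else f (xiMap x)

/-- The map `Ψ_η : C(X_A, ℤ) → C(X_Ã, ℤ)`. -/
noncomputable def PsiEta (f : (ℕ → ℕ) → ℤ) : (ℕ → ℕ) → ℤ := fun x =>
  if x 0 = 0 then 0 else f (etaMap x)

/-!
`ξ` places the `n`-th letter of `x` at position `posf x n` and zeros elsewhere, with `posf x`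
strictly increasing. When `x` has no zero letters, the nonzero positions of `ξ(x)` are exactly
the range of `posf x`, so `η` reads them back in order and `η ∘ ξ = id`. Hence `Ψ_η` evaluated at
`ξ(x)` gives `f x`, while at `σ(ξ(x))`, which starts with the `0` inserted after a leading `1`,
it gives `0`.
-/

theorem Nat.nth_eq_of_strictMono {p : ℕ → Prop} {f : ℕ → ℕ} (hf : StrictMono f)
    (hp : ∀ k, p k ↔ k ∈ Set.range f) (n : ℕ) : Nat.nth p n = f n := by
  have hinf : (Set.ofPred p).Infinite := by
    convert Set.infinite_range_of_injective hf.injective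
    exact Set.ext hp
  have h := Nat.nth_comp_of_strictMono hf (fun k => (hp k).mp) (n := n)
    fun hfin => absurd hfin hinf
  simpa [Set.mem_ofPred_eq, hp] using h.symm

lemma xiMap_zero (x : ℕ → ℕ) : xiMap x 0 = x 0 :=
  xiMap_posf x 0

lemma xiMap_eq_zero_of_notMem_range (x : ℕ → ℕ) {m : ℕ} (hm : m ∉ Set.range (posf x)) :
    xiMap x m = 0 := by
  rw [xiMap, dif_neg (show ¬∃ n, posf x n = m from hm)]

lemma xiMap_posf_add_one (x : ℕ → ℕ) {n : ℕ} (hn : x n = 1) : xiMap x (posf x n + 1) = 0 := by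
  refine xiMap_eq_zero_of_notMem_range x ?_
  rintro ⟨k, hk⟩
  have hsucc : posf x (n + 1) = posf x n + 2 := by simp [posf, hn]
  have hnk : n < k := (posf_strictMono x).lt_iff_lt.mp (by omega)
  have hkn : k < n + 1 := (posf_strictMono x).lt_iff_lt.mp (by omega)
  omega

lemma xiMap_ne_zero_iff (x : ℕ → ℕ) (hx : ∀ n, x n ≠ 0) (m : ℕ) :
    xiMap x m ≠ 0 ↔ m ∈ Set.range (posf x) := by
  refine ⟨fun hm => not_not.mp fun h => hm (xiMap_eq_zero_of_notMem_range x h), ?_⟩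
  rintro ⟨n, rfl⟩
  exact (xiMap_posf x n).symm ▸ hx n

lemma etaMap_xiMap (x : ℕ → ℕ) (hx : ∀ n, x n ≠ 0) : etaMap (xiMap x) = x := by
  funext m
  rw [etaMap, Nat.nth_eq_of_strictMono (posf_strictMono x) (xiMap_ne_zero_iff x hx),
    xiMap_posf]

theorem PsiXi_PsiEta_general (N : ℕ) (A : ℕ → ℕ → ℕ)
    (f : (ℕ → ℕ) → ℤ) :
    ∀ x ∈ ShiftSpace N A, PsiXi (PsiEta f) x = f x := by
  rintro x ⟨hx, -⟩
  have hx0 : ∀ n, x n ≠ 0 := fun n => Nat.one_le_iff_ne_zero.mp (hx n).1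
  have hη : PsiEta f (xiMap x) = f x := by
    rw [PsiEta, xiMap_zero, if_neg (hx0 0), etaMap_xiMap x hx0]
  by_cases h1 : x 0 = 1
  · have hσ : PsiEta f (rawShift (xiMap x)) = 0 :=
      if_pos (xiMap_posf_add_one x (n := 0) h1)
    rw [PsiXi, if_pos h1, hη, hσ, add_zero]
  · rw [PsiXi, if_neg h1, hη]

/-- `(Ψ_ξ ∘ Ψ_η)(f) = f` for all `f ∈ C(X_A, ℤ)`. -/
theorem PsiXi_PsiEta (N : ℕ) (A : ℕ → ℕ → ℕ)
    (f : (ℕ → ℕ) → ℤ) (hf : ContinuousOn f (ShiftSpace N A)) :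
    ∀ x ∈ ShiftSpace N A, PsiXi (PsiEta f) x = f x :=
  PsiXi_PsiEta_general N A f
end
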